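/- arXiv:1904.00006 — 3 statements merged into one kernel-verified Lean document; each statement's English description precedes it below -/
import Mathlib

section
/- Take k = N. For all a ≠ b in {1,…,N}, the highest-configuration vector satisfies (E_{ab}E_{ba} − E_{aa}) (e_1 ⊗ ⋯ ⊗ e_N) = (−1)^{p(b)} P_{ab} (e_1 ⊗ ⋯ ⊗ e_N), where P_{ab} is the graded permutation of tensor slots a and b. -/
open Finset

namespace Glnm

/-- Parity: `p(a) = 0` for bosonic indices (`a ≤ n` in 1-based terms, i.e. `a.val < n`),
`p(a) = 1` for fermionic ones. -/
def par (n N : ℕ) (a : Fin N) : ℕ := if (a : ℕ) < n then 0 else 1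

/-- The Koszul-sign realization `e^{(j)}_{ab} = σ^{p(a)+p(b)} ⊗ ⋯ ⊗ σ^{p(a)+p(b)} ⊗ e_{ab} ⊗ I ⊗ ⋯ ⊗ I`
on `(ℂ^N)^{⊗k}`, realized as matrices indexed by tuples `Fin k → Fin N`. -/
noncomputable def eop (n N k : ℕ) (j : Fin k) (a b : Fin N) :
    Matrix (Fin k → Fin N) (Fin k → Fin N) ℂ :=
  fun x y =>
    (if x j = a ∧ y j = b then (1 : ℂ) else 0) *
      (-1 : ℂ) ^ ((par n N a + par n N b) *
        ∑ l ∈ Finset.univ.filter (fun l : Fin k => l < j), par n N (x l)) *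
      ∏ l ∈ Finset.univ.filter (fun l : Fin k => l ≠ j),
        (if x l = y l then (1 : ℂ) else 0)

/-- `E_{ab} = ∑_{j=1}^k e^{(j)}_{ab}`. -/
noncomputable def Egen (n N k : ℕ) (a b : Fin N) : Matrix (Fin k → Fin N) (Fin k → Fin N) ℂ :=
  ∑ j : Fin k, eop n N k j a b

/-- The graded permutation `P_{ij} = ∑_{a,b} (−1)^{p(b)} e^{(i)}_{ab} e^{(j)}_{ba}`. -/
noncomputable def Pg (n N k : ℕ) (i j : Fin k) : Matrix (Fin k → Fin N) (Fin k → Fin N) ℂ :=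
  ∑ a : Fin N, ∑ b : Fin N,
    ((-1 : ℂ) ^ par n N b) • (eop n N k i a b * eop n N k j b a)

/-- Commutator. -/
def comm {α : Type*} [Ring α] (X Y : α) : α := X * Y - Y * X

/-- Anticommutator. -/
def acomm {α : Type*} [Ring α] (X Y : α) : α := X * Y + Y * X

/-- The dynamical connection matrix
`A_a = ∑_j z_j e^{(j)}_{aa} + ∑_{b ≠ a} (−1)^{p(b)} (E_{ab}E_{ba} − E_{aa})/(λ_a − λ_b)`. -/
noncomputable def dynA (n N k : ℕ) (z : Fin k → ℂ) (lam : Fin N → ℂ) (a : Fin N) :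
    Matrix (Fin k → Fin N) (Fin k → Fin N) ℂ :=
  (∑ j : Fin k, z j • eop n N k j a a) +
    ∑ b ∈ Finset.univ.filter (fun b : Fin N => b ≠ a),
      (((-1 : ℂ) ^ par n N b) / (lam a - lam b)) •
        (Egen n N k a b * Egen n N k b a - Egen n N k a a)

/-- The (twisted) KZ connection matrix
`B_i = ∑_c λ_c e^{(i)}_{cc} + ∑_{j ≠ i} P_{ij}/(z_i − z_j)`. -/
noncomputable def kzB (n N k : ℕ) (z : Fin k → ℂ) (lam : Fin N → ℂ) (i : Fin k) :
    Matrix (Fin k → Fin N) (Fin k → Fin N) ℂ :=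
  (∑ c : Fin N, lam c • eop n N k i c c) +
    ∑ j ∈ Finset.univ.filter (fun j : Fin k => j ≠ i),
      ((z i - z j)⁻¹) • Pg n N k i j

/-- Adjacent graded permutation `P_{s_l} = P_{l,l+1}` (0-based slots). -/
noncomputable def Ps (n N k : ℕ) (l : ℕ) (h : l + 1 < k) :
    Matrix (Fin k → Fin N) (Fin k → Fin N) ℂ :=
  Pg n N k ⟨l, Nat.lt_of_succ_lt h⟩ ⟨l + 1, h⟩

/-- The highest-configuration vector `e_1 ⊗ ⋯ ⊗ e_N ∈ (ℂ^N)^{⊗N}`. -/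
noncomputable def baseVec (N : ℕ) : (Fin N → Fin N) → ℂ :=
  fun x => if x = (fun j => j) then 1 else 0

/-- `Ω^i = ∑_{σ ∈ S_N} (−1)^{i·ℓ(σ)} P_σ (e_1 ⊗ ⋯ ⊗ e_N)`, where `P_σ = ρ σ` for the
(unique) multiplicative extension `ρ` of the adjacent graded permutations. -/
noncomputable def OmegaVec (N : ℕ) (i : ℕ)
    (ρ : Equiv.Perm (Fin N) →* Matrix (Fin N → Fin N) (Fin N → Fin N) ℂ) :
    (Fin N → Fin N) → ℂ :=
  ∑ σ : Equiv.Perm (Fin N),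
    (((Equiv.Perm.sign σ : ℤ) : ℂ) ^ i) • Matrix.mulVec (ρ σ) (baseVec N)

/-- The set of `(z, λ)` with pairwise distinct `z`'s and pairwise distinct `λ`'s. -/
def Usep (N : ℕ) : Set ((Fin N → ℂ) × (Fin N → ℂ)) :=
  {p | (∀ i j : Fin N, i ≠ j → p.1 i ≠ p.1 j) ∧ (∀ a b : Fin N, a ≠ b → p.2 a ≠ p.2 b)}

end Glnm

/-!
On `e_1 ⊗ ⋯ ⊗ e_N` every colour occurs exactly once, colour `c` in slot `c`. So `E_{ba}` only
recolours slot `a` to `b`, after which colour `b` sits in slots `a` and `b`, and `E_{ab}` can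
recolour either: recolouring slot `a` returns the base vector, which `E_{aa}` (the identity
there) cancels; recolouring slot `b` gives the swapped configuration. `P_{ab}` also sends the base
vector to the swapped configuration, so all that remains is to compare Koszul signs modulo 2.
-/

open Finset Function
open scoped Matrix

namespace Glnm

variable {n N k : ℕ}

def parBelow (n N : ℕ) {k : ℕ} (j : Fin k) (y : Fin k → Fin N) : ℕ :=
  ∑ l ∈ Finset.univ.filter (fun l : Fin k => l < j), par n N (y l)

lemma par_eq_zero_or_one (a : Fin N) : par n N a = 0 ∨ par n N a = 1 := by
  unfold par; split <;> simp

lemma parBelow_update_of_le {i j : Fin k} (hji : j ≤ i) (y : Fin k → Fin N) (c : Fin N) :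
    parBelow n N j (update y i c) = parBelow n N j y :=
  sum_congr rfl fun l hl => by
    rw [update_of_ne (((mem_filter.1 hl).2).trans_le hji).ne]

lemma parBelow_update_add_of_lt {i j : Fin k} (hij : i < j) (y : Fin k → Fin N) (c : Fin N) :
    parBelow n N j (update y i c) + par n N (y i) = parBelow n N j y + par n N c := by
  have hi : i ∈ univ.filter (fun l : Fin k => l < j) := by simp [hij]
  unfold parBelow
  rw [← add_sum_erase _ _ hi, ← add_sum_erase _ _ hi, update_self,
    sum_congr rfl fun l hl => by rw [update_of_ne (ne_of_mem_erase hl)]]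
  ring

lemma eop_apply (j : Fin k) (c d : Fin N) (x y : Fin k → Fin N) :
    eop n N k j c d x y =
      if y j = d ∧ x = update y j c then
        (-1 : ℂ) ^ ((par n N c + par n N d) * parBelow n N j y)
      else 0 := by
  unfold eop
  by_cases hcol : y j = d ∧ x = update y j c
  · obtain ⟨rfl, rfl⟩ := hcol
    rw [prod_eq_one fun l hl => if_pos (update_of_ne (mem_filter.1 hl).2 _ _)]
    have hsign := parBelow_update_of_le (n := n) (le_refl j) y c
    simp only [parBelow] at hsign
    simp [hsign, parBelow]
  rw [if_neg hcol]
  by_cases hslot : x j = c ∧ y j = d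
  · obtain ⟨hxj, hyj⟩ := hslot
    obtain ⟨l, hl⟩ := ne_iff.1 fun h => hcol ⟨hyj, h⟩
    have hlj : l ≠ j := by rintro rfl; simp [hxj] at hl
    rw [prod_eq_zero (i := l) (by simp [hlj]) (if_neg (by rwa [update_of_ne hlj] at hl))]
    simp
  · simp [hslot]

lemma mul_eop_apply (M : Matrix (Fin k → Fin N) (Fin k → Fin N) ℂ) (j : Fin k) (c d : Fin N)
    (x y : Fin k → Fin N) :
    (M * eop n N k j c d) x y =
      if y j = d then M x (update y j c) * (-1 : ℂ) ^ ((par n N c + par n N d) * parBelow n N j y)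
      else 0 := by
  simp only [Matrix.mul_apply, eop_apply]
  split_ifs with h <;> simp [h]

lemma Egen_apply (c d : Fin N) (x y : Fin k → Fin N) :
    Egen n N k c d x y =
      ∑ j ∈ univ.filter (fun j => y j = d),
        if x = update y j c then (-1 : ℂ) ^ ((par n N c + par n N d) * parBelow n N j y) else 0 := by
  simp only [Egen, Matrix.sum_apply, eop_apply, ite_and, sum_filter]

lemma Egen_self_apply (c : Fin N) (x y : Fin k → Fin N) :
    Egen n N k c c x y = if x = y then (#(univ.filter fun j => y j = c) : ℂ) else 0 := by
  have hterm : ∀ j ∈ univ.filter (fun j => y j = c),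
      (if x = update y j c then (-1 : ℂ) ^ ((par n N c + par n N c) * parBelow n N j y) else 0) =
        if x = y then 1 else 0 := by
    intro j hj
    rw [← (mem_filter.1 hj).2, update_eq_self, ← two_mul, mul_assoc, pow_mul]
    simp
  rw [Egen_apply, sum_congr rfl hterm]
  split_ifs <;> simp

lemma mulVec_baseVec (M : Matrix (Fin N → Fin N) (Fin N → Fin N) ℂ) (x : Fin N → Fin N) :
    (M *ᵥ baseVec N) x = M x id := by
  simp [Matrix.mulVec, dotProduct, baseVec, ← Function.id_def]

section HighestConfiguration

variable {a b : Fin N}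

lemma filter_update_id_eq_pair (hab : a ≠ b) :
    univ.filter (fun j => update (id : Fin N → Fin N) a b j = b) = {a, b} := by
  ext j
  by_cases hj : j = a <;> simp [update_apply, hj, hab]

lemma Egen_mul_Egen_sub_Egen_apply_id (hab : a ≠ b) (x : Fin N → Fin N) :
    (Egen n N N a b * Egen n N N b a - Egen n N N a a) x id =
      if x = Equiv.swap a b then
        (-1 : ℂ) ^ ((par n N a + par n N b) * (parBelow n N b (update id a b) + parBelow n N a id))
      else 0 := by
  have hcol : (Egen n N N a b * Egen n N N b a) x id =
      Egen n N N a b x (update id a b) *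
        (-1 : ℂ) ^ ((par n N b + par n N a) * parBelow n N a id) := by
    rw [show Egen n N N b a = ∑ j, eop n N N j b a from rfl, Matrix.mul_sum, Matrix.sum_apply]
    simp [mul_eop_apply]
  have hswap : update (update id a b) b a = ⇑(Equiv.swap a b) := by
    rw [Equiv.swap_comm, Equiv.swap_eq_update]
  rw [Matrix.sub_apply, hcol, Egen_apply, filter_update_id_eq_pair hab, sum_pair hab,
    Egen_self_apply, hswap, update_idem, parBelow_update_of_le le_rfl,
    show update id a a = id from update_eq_self a id, add_comm (par n N b)]
  by_cases hx : x = id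
  · have hx' : x ≠ Equiv.swap a b := by
      rintro rfl
      exact hab.symm (by simpa using congrFun hx a)
    rw [if_pos hx, if_neg hx', if_pos hx, add_zero, ← pow_add, ← two_mul, pow_mul]
    simp [hx', filter_eq']
  · rw [if_neg hx, if_neg hx, mul_add, pow_add]
    split_ifs <;> ring

lemma Pg_apply_id (hab : a ≠ b) (x : Fin N → Fin N) :
    Pg n N N a b x id =
      if x = Equiv.swap a b then
        (-1 : ℂ) ^ (par n N a +
          (par n N a + par n N b) * (parBelow n N a (update id b a) + parBelow n N b id))
      else 0 := by
  simp only [Pg, Matrix.sum_apply, Matrix.smul_apply, mul_eop_apply, eop_apply, id_eq,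
    update_of_ne hab, ite_and, smul_eq_mul]
  rw [Fintype.sum_eq_single b fun c hc => by simp [Ne.symm hc],
    Fintype.sum_eq_single a fun d hd => by simp [Ne.symm hd]]
  simp only [if_true, ← Equiv.swap_eq_update, add_comm (par n N b)]
  split_ifs
  · rw [pow_add, mul_add, pow_add]
  · simp

/-- Putting colour `b` into slot `a < b` changes the parity count below `b` by `p(b) - p(a)`,
and `(p(a) + p(b))² ≡ p(a) + p(b)`; symmetrically for `b < a`. -/
lemma swap_sign_exponent_modEq (hab : a ≠ b) :
    (par n N a + par n N b) * (parBelow n N b (update id a b) + parBelow n N a id) ≡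
      par n N b + (par n N a +
        (par n N a + par n N b) * (parBelow n N a (update id b a) + parBelow n N b id)) [MOD 2] := by
  have transport : ∀ {i j : Fin N}, i < j →
      parBelow n N j (update id i j) + par n N i = parBelow n N j id + par n N j ∧
        parBelow n N i (update id j i) = parBelow n N i id :=
    fun hij => ⟨parBelow_update_add_of_lt hij id _, parBelow_update_of_le hij.le id _⟩
  unfold Nat.ModEq
  rcases hab.lt_or_gt with h | h <;> obtain ⟨h₁, h₂⟩ := transport h <;>
    rcases par_eq_zero_or_one (n := n) a with ha | ha <;>
    rcases par_eq_zero_or_one (n := n) b with hb | hb <;>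
    · rw [ha, hb] at h₁ ⊢
      omega

end HighestConfiguration

end Glnm

open Glnm in
/-- `(E_{ab}E_{ba} − E_{aa})(e_1 ⊗ ⋯ ⊗ e_N) = (−1)^{p(b)} P_{ab}(e_1 ⊗ ⋯ ⊗ e_N)`
for `k = N = n + m`. -/
theorem highest_configuration_action (n m : ℕ) (a b : Fin (n + m)) (hab : a ≠ b) :
    Matrix.mulVec
        (Egen n (n + m) (n + m) a b * Egen n (n + m) (n + m) b a -
          Egen n (n + m) (n + m) a a) (baseVec (n + m)) =
      ((-1 : ℂ) ^ par n (n + m) b) •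
        Matrix.mulVec (Pg n (n + m) (n + m) a b) (baseVec (n + m)) := by
  funext x
  rw [Pi.smul_apply, mulVec_baseVec, mulVec_baseVec, Egen_mul_Egen_sub_Egen_apply_id hab,
    Pg_apply_id hab, smul_eq_mul, mul_ite, mul_zero, ← pow_add,
    pow_eq_pow_of_modEq (swap_sign_exponent_modEq hab) neg_one_sq]
end

section
/- (Eigenvector Lemma.) For i ∈ {0,1} and all a ≠ b in {1,…,N}, the (skew-)symmetrized vectors Ω^i are eigenvectors: (E_{ab}E_{ba} − E_{aa}) Ω^i = (−1)^{p(b)+i} Ω^i. -/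
open Finset

namespace Glnm

/-- Basis vector indicator. -/
def ev {N k : ℕ} (y : Fin k → Fin N) : (Fin k → Fin N) → ℂ := fun r => if r = y then 1 else 0

lemma par_cases (n N : ℕ) (x : Fin N) : par n N x = 0 ∨ par n N x = 1 := by
  unfold par; split <;> simp

lemma neg_one_pow_mod {a b : ℕ} (h : a % 2 = b % 2) : (-1 : ℂ) ^ a = (-1) ^ b := by
  rw [neg_one_pow_eq_pow_mod_two, h, ← neg_one_pow_eq_pow_mod_two]

lemma mulVec_ev {N k : ℕ} (M : Matrix (Fin k → Fin N) (Fin k → Fin N) ℂ) (y : Fin k → Fin N) :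
    M.mulVec (ev y) = fun r => M r y := by
  funext r
  simp [Matrix.mulVec, dotProduct, ev]

lemma eop_mulVec (n N k : ℕ) (j : Fin k) (a b : Fin N) (y : Fin k → Fin N) :
    (eop n N k j a b).mulVec (ev y) =
      if y j = b then
        ((-1 : ℂ) ^ ((par n N a + par n N b) *
            ∑ l ∈ Finset.univ.filter (fun l : Fin k => l < j), par n N (y l))) •
          ev (Function.update y j a)
      else 0 := by
  rw [mulVec_ev]
  funext r
  by_cases hyb : y j = b
  · rw [if_pos hyb]
    by_cases hr : r = Function.update y j a
    · subst hr
      have h2 : ∀ l : Fin k, l ≠ j → Function.update y j a l = y l := fun l hl =>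
        Function.update_of_ne hl _ _
      have hsum : ∑ l ∈ Finset.univ.filter (fun l : Fin k => l < j),
          par n N (Function.update y j a l) =
          ∑ l ∈ Finset.univ.filter (fun l : Fin k => l < j), par n N (y l) := by
        apply Finset.sum_congr rfl
        intro l hl
        rw [h2 l (ne_of_lt (Finset.mem_filter.mp hl).2)]
      have hprod : (∏ l ∈ Finset.univ.filter (fun l : Fin k => l ≠ j),
          (if Function.update y j a l = y l then (1:ℂ) else 0)) = 1 := by
        apply Finset.prod_eq_one
        intro l hl
        rw [h2 l (Finset.mem_filter.mp hl).2, if_pos rfl]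
      show eop n N k j a b (Function.update y j a) y = _
      rw [eop]
      rw [if_pos ⟨Function.update_self j a y, hyb⟩, hsum, hprod, one_mul, mul_one,
        Pi.smul_apply, smul_eq_mul, ev, if_pos rfl, mul_one]
    · rw [Pi.smul_apply, ev, if_neg hr, smul_zero]
      show eop n N k j a b r y = 0
      rw [eop]
      by_cases hrj : r j = a
      · have : ∃ l, l ≠ j ∧ r l ≠ y l := by
          by_contra hc
          push_neg at hc
          apply hr
          funext l
          by_cases hl : l = j
          · subst hl; rw [hrj, Function.update_self]
          · rw [hc l hl, Function.update_of_ne hl]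
        obtain ⟨l, hl, hrl⟩ := this
        rw [Finset.prod_eq_zero (i := l) (by simp [hl]) (by rw [if_neg hrl]), mul_zero]
      · rw [if_neg (fun h => hrj h.1), zero_mul, zero_mul]
  · rw [if_neg hyb]
    show eop n N k j a b r y = 0
    rw [eop, if_neg (fun h => hyb h.2), zero_mul, zero_mul]

end Glnm
namespace Glnm

lemma sum_mulVec {I : Type*} [Fintype I] [DecidableEq I] {ι : Type*} (s : Finset ι)
    (f : ι → Matrix I I ℂ) (v : I → ℂ) :
    (∑ x ∈ s, f x).mulVec v = ∑ x ∈ s, (f x).mulVec v :=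
  map_sum (Matrix.mulVec.addMonoidHomLeft v) f s

lemma filter_lt_succ (k : ℕ) (i j : Fin k) (hij : (i:ℕ)+1 = j) :
    Finset.univ.filter (fun l : Fin k => l < j) =
    insert i (Finset.univ.filter (fun l : Fin k => l < i)) := by
  ext l
  simp only [Finset.mem_filter, Finset.mem_univ, true_and, Finset.mem_insert, Fin.lt_def]
  constructor
  · intro h
    rcases Nat.lt_or_ge (l:ℕ) i with h'|h'
    · exact Or.inr h'
    · left; apply Fin.ext; omega
  · rintro (rfl|h) <;> omega

lemma sum_lt_succ (k : ℕ) (i j : Fin k) (hij : (i:ℕ)+1 = j) (f : Fin k → ℕ) :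
    ∑ l ∈ Finset.univ.filter (fun l : Fin k => l < j), f l
      = f i + ∑ l ∈ Finset.univ.filter (fun l : Fin k => l < i), f l := by
  rw [filter_lt_succ k i j hij, Finset.sum_insert (by simp)]

lemma update_update_eq_comp_swap {N k : ℕ} (y : Fin k → Fin N) (i j : Fin k) (hne : i ≠ j) :
    Function.update (Function.update y j (y i)) i (y j) = y ∘ Equiv.swap i j := by
  funext l
  by_cases hli : l = i
  · subst hli
    rw [Function.update_self, Function.comp_apply, Equiv.swap_apply_left]
  · rw [Function.update_of_ne hli]
    by_cases hlj : l = j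
    · subst hlj
      rw [Function.update_self, Function.comp_apply, Equiv.swap_apply_right]
    · rw [Function.update_of_ne hlj, Function.comp_apply,
        Equiv.swap_apply_of_ne_of_ne hli hlj]

lemma Pg_mulVec_adj (n N k : ℕ) (i j : Fin k) (hij : (i:ℕ)+1 = j) (y : Fin k → Fin N) :
    (Pg n N k i j).mulVec (ev y) =
      ((-1 : ℂ) ^ (par n N (y i) * par n N (y j))) • ev (y ∘ Equiv.swap i j) := by
  have hne : i ≠ j := by intro h; rw [h] at hij; omega
  rw [Pg, sum_mulVec, Finset.sum_eq_single (y j)]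
  rotate_left
  · intro a' _ ha'
    rw [sum_mulVec]
    apply Finset.sum_eq_zero
    intro b' _
    rw [Matrix.smul_mulVec, ← Matrix.mulVec_mulVec, eop_mulVec,
      if_neg (fun h => ha' h.symm), Matrix.mulVec_zero, smul_zero]
  · intro h; exact absurd (Finset.mem_univ _) h
  rw [sum_mulVec, Finset.sum_eq_single (y i)]
  rotate_left
  · intro b' _ hb'
    rw [Matrix.smul_mulVec, ← Matrix.mulVec_mulVec, eop_mulVec, if_pos rfl,
      Matrix.mulVec_smul, eop_mulVec,
      if_neg (by rw [Function.update_of_ne hne]; exact fun h => hb' h.symm),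
      smul_zero, smul_zero]
  · intro h; exact absurd (Finset.mem_univ _) h
  rw [Matrix.smul_mulVec, ← Matrix.mulVec_mulVec, eop_mulVec, if_pos rfl,
    Matrix.mulVec_smul, eop_mulVec, if_pos (by rw [Function.update_of_ne hne])]
  rw [update_update_eq_comp_swap y i j hne]
  have hzsum : ∑ l ∈ Finset.univ.filter (fun l : Fin k => l < i),
      par n N (Function.update y j (y i) l)
      = ∑ l ∈ Finset.univ.filter (fun l : Fin k => l < i), par n N (y l) := by
    apply Finset.sum_congr rfl
    intro l hl
    have hlj : l ≠ j := by
      have := (Finset.mem_filter.mp hl).2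
      intro h; subst h
      rw [Fin.lt_def] at this; omega
    rw [Function.update_of_ne hlj]
  rw [hzsum, sum_lt_succ k i j hij, smul_smul, smul_smul, ← pow_add, ← pow_add]
  congr 1
  apply neg_one_pow_mod
  rcases par_cases n N (y i) with h1|h1 <;> rcases par_cases n N (y j) with h2|h2 <;>
    rw [h1, h2] <;> omega

end Glnm
namespace Glnm

lemma ext_of_col {N k : ℕ} (M M' : Matrix (Fin k → Fin N) (Fin k → Fin N) ℂ)
    (h : ∀ y, M.mulVec (ev y) = M'.mulVec (ev y)) : M = M' := by
  ext r y
  have := congrFun (h y) r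
  rwa [mulVec_ev, mulVec_ev] at this

lemma mulVec_sum {I : Type*} [Fintype I] [DecidableEq I] {ι : Type*} (s : Finset ι)
    (M : Matrix I I ℂ) (f : ι → I → ℂ) :
    M.mulVec (∑ x ∈ s, f x) = ∑ x ∈ s, M.mulVec (f x) :=
  map_sum M.mulVecLin f s

lemma Egen_mulVec (n N k : ℕ) (a b : Fin N) (y : Fin k → Fin N) :
    (Egen n N k a b).mulVec (ev y) =
      ∑ j : Fin k, (if y j = b then
        ((-1 : ℂ) ^ ((par n N a + par n N b) *
            ∑ l ∈ Finset.univ.filter (fun l : Fin k => l < j), par n N (y l))) •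
          ev (Function.update y j a)
      else 0) := by
  rw [Egen, sum_mulVec]
  exact Finset.sum_congr rfl fun j _ => eop_mulVec n N k j a b y

lemma update_comp_swap {N k : ℕ} (y : Fin k → Fin N) (i j j' : Fin k) (a : Fin N) :
    Function.update (y ∘ Equiv.swap i j) (Equiv.swap i j j') a =
      (Function.update y j' a) ∘ Equiv.swap i j := by
  funext l
  by_cases hl : l = Equiv.swap i j j'
  · subst hl
    rw [Function.update_self, Function.comp_apply, Equiv.swap_apply_self,
      Function.update_self]
  · rw [Function.update_of_ne hl, Function.comp_apply, Function.comp_apply,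
      Function.update_of_ne]
    intro h
    apply hl
    rw [← h, Equiv.swap_apply_self]

lemma Egen_comm_Pg (n N k : ℕ) (a b : Fin N) (i j : Fin k) (hij : (i:ℕ)+1 = j) :
    Egen n N k a b * Pg n N k i j = Pg n N k i j * Egen n N k a b := by
  have hne : i ≠ j := by intro h; rw [h] at hij; omega
  apply ext_of_col
  intro y
  rw [← Matrix.mulVec_mulVec, ← Matrix.mulVec_mulVec, Pg_mulVec_adj n N k i j hij y,
    Matrix.mulVec_smul, Egen_mulVec, Egen_mulVec, mulVec_sum, Finset.smul_sum]
  apply Fintype.sum_equiv (Equiv.swap i j)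
  intro j'
  rw [apply_ite ((Pg n N k i j).mulVec), Matrix.mulVec_zero]
  simp only [Function.comp_apply]
  by_cases hc : y ((Equiv.swap i j) j') = b
  · rw [if_pos hc, if_pos hc, Matrix.mulVec_smul, Pg_mulVec_adj n N k i j hij,
      smul_smul, smul_smul, ← pow_add, ← pow_add]
    have hvec : Function.update (y ∘ Equiv.swap i j) j' a =
        (Function.update y ((Equiv.swap i j) j') a) ∘ Equiv.swap i j := by
      have := update_comp_swap y i j ((Equiv.swap i j) j') a
      rw [Equiv.swap_apply_self] at this
      exact this
    rw [hvec]
    congr 1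
    -- sign identity
    set u := Function.update y ((Equiv.swap i j) j') a with hu
    have hui : u i = if (Equiv.swap i j) j' = i then a else y i := by
      by_cases h : (Equiv.swap i j) j' = i
      · rw [if_pos h, hu, h, Function.update_self]
      · rw [if_neg h, hu, Function.update_of_ne (fun hh => h hh.symm)]
    have huj : u j = if (Equiv.swap i j) j' = j then a else y j := by
      by_cases h : (Equiv.swap i j) j' = j
      · rw [if_pos h, hu, h, Function.update_self]
      · rw [if_neg h, hu, Function.update_of_ne (fun hh => h hh.symm)]
    by_cases h1 : j' = i
    · rw [h1] at hc hui huj ⊢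
      rw [Equiv.swap_apply_left] at hc hui huj ⊢
      rw [hui, huj, if_neg (fun h => hne h.symm), if_pos rfl,
        sum_lt_succ k i j hij]
      have hsum : ∑ l ∈ Finset.univ.filter (fun l : Fin k => l < i),
          par n N (y ((Equiv.swap i j) l))
          = ∑ l ∈ Finset.univ.filter (fun l : Fin k => l < i), par n N (y l) := by
        apply Finset.sum_congr rfl
        intro l hl
        have hli : l ≠ i := ne_of_lt (Finset.mem_filter.mp hl).2
        have hlj : l ≠ j := by
          have := (Finset.mem_filter.mp hl).2
          rw [Fin.lt_def] at this; intro h; subst h; omega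
        rw [Equiv.swap_apply_of_ne_of_ne hli hlj]
      rw [hsum]
      apply neg_one_pow_mod
      have hpb : par n N (y j) = par n N b := by rw [hc]
      rcases par_cases n N a with h2|h2 <;> rcases par_cases n N b with h3|h3 <;>
        rcases par_cases n N (y i) with h4|h4 <;>
        rw [h2, h3, h4] <;> rw [h3] at hpb <;> omega
    · by_cases h2 : j' = j
      · rw [h2] at hc hui huj ⊢
        rw [Equiv.swap_apply_right] at hc hui huj ⊢
        rw [hui, huj, if_pos rfl, if_neg hne, sum_lt_succ k i j hij]
        have hsum : ∑ l ∈ Finset.univ.filter (fun l : Fin k => l < i),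
            par n N (y ((Equiv.swap i j) l))
            = ∑ l ∈ Finset.univ.filter (fun l : Fin k => l < i), par n N (y l) := by
          apply Finset.sum_congr rfl
          intro l hl
          have hli : l ≠ i := ne_of_lt (Finset.mem_filter.mp hl).2
          have hlj : l ≠ j := by
            have := (Finset.mem_filter.mp hl).2
            rw [Fin.lt_def] at this; intro h; subst h; omega
          rw [Equiv.swap_apply_of_ne_of_ne hli hlj]
        have hswi : (Equiv.swap i j) i = j := Equiv.swap_apply_left i j
        rw [hswi, hsum]
        apply neg_one_pow_mod
        have hpb : par n N (y i) = par n N b := by rw [hc]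
        rcases par_cases n N a with h3|h3 <;> rcases par_cases n N b with h4|h4 <;>
          rcases par_cases n N (y j) with h5|h5 <;>
          rw [h3, h4, h5] <;> rw [h4] at hpb <;> omega
      · rw [Equiv.swap_apply_of_ne_of_ne h1 h2] at hc hui huj ⊢
        rw [hui, huj, if_neg h1, if_neg h2]
        have hsum : ∑ l ∈ Finset.univ.filter (fun l : Fin k => l < j'),
            par n N (y ((Equiv.swap i j) l))
            = ∑ l ∈ Finset.univ.filter (fun l : Fin k => l < j'), par n N (y l) := by
          apply Finset.sum_equiv (Equiv.swap i j)
          · intro l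
            simp only [Finset.mem_filter, Finset.mem_univ, true_and, Fin.lt_def]
            have hj'i : (j' : ℕ) ≠ i := fun h => h1 (Fin.ext h)
            have hj'j : (j' : ℕ) ≠ j := fun h => h2 (Fin.ext h)
            by_cases hli : l = i
            · subst hli
              rw [Equiv.swap_apply_left]
              omega
            · by_cases hlj : l = j
              · subst hlj
                rw [Equiv.swap_apply_right]
                omega
              · rw [Equiv.swap_apply_of_ne_of_ne hli hlj]
          · intro l _
            rfl
        rw [hsum]
        apply neg_one_pow_mod
        omega
  · rw [if_neg hc, if_neg hc, smul_zero]

end Glnm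
namespace Glnm

lemma adj_closure (N : ℕ) :
    Submonoid.closure {σ : Equiv.Perm (Fin N) | ∃ l, ∃ h : l+1 < N,
      σ = Equiv.swap ⟨l, Nat.lt_of_succ_lt h⟩ ⟨l+1, h⟩} = ⊤ := by
  cases N with
  | zero =>
      apply top_unique
      intro σ _
      have : σ = 1 := by ext x; exact x.elim0
      rw [this]
      exact Submonoid.one_mem _
  | succ M =>
      rw [← Equiv.Perm.mclosure_swap_castSucc_succ M]
      congr 1
      ext σ
      simp only [Set.mem_setOf_eq, Set.mem_range]
      constructor
      · rintro ⟨l, h, rfl⟩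
        refine ⟨⟨l, by omega⟩, ?_⟩
        congr 1 <;> apply Fin.ext <;> simp
      · rintro ⟨i, rfl⟩
        refine ⟨(i : ℕ), by omega, ?_⟩
        congr 1 <;> apply Fin.ext <;> simp

lemma Egen_comm_rho (n N : ℕ)
    (ρ : Equiv.Perm (Fin N) →* Matrix (Fin N → Fin N) (Fin N → Fin N) ℂ)
    (hρ : ∀ (l : ℕ) (h : l + 1 < N),
      ρ (Equiv.swap ⟨l, Nat.lt_of_succ_lt h⟩ ⟨l+1, h⟩) =
        Pg n N N ⟨l, Nat.lt_of_succ_lt h⟩ ⟨l+1, h⟩)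
    (a b : Fin N) (σ : Equiv.Perm (Fin N)) :
    Egen n N N a b * ρ σ = ρ σ * Egen n N N a b := by
  have hσ : σ ∈ Submonoid.closure {σ : Equiv.Perm (Fin N) | ∃ l, ∃ h : l+1 < N,
      σ = Equiv.swap ⟨l, Nat.lt_of_succ_lt h⟩ ⟨l+1, h⟩} := by
    rw [adj_closure]; trivial
  induction hσ using Submonoid.closure_induction with
  | mem x hx =>
      obtain ⟨l, h, rfl⟩ := hx
      rw [hρ l h]
      exact Egen_comm_Pg n N N a b _ _ (by simp)
  | one => rw [map_one, mul_one, one_mul]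
  | mul x y hx hy ihx ihy =>
      rw [map_mul, ← mul_assoc, ihx, mul_assoc, ihy, mul_assoc]

lemma sum_between_succ (N : ℕ) (c e d : Fin N) (hce : c < e) (hed : (e:ℕ)+1 = d)
    (f : Fin N → ℕ) :
    ∑ l ∈ Finset.univ.filter (fun l : Fin N => c < l ∧ l < d), f l
      = f e + ∑ l ∈ Finset.univ.filter (fun l : Fin N => c < l ∧ l < e), f l := by
  have : Finset.univ.filter (fun l : Fin N => c < l ∧ l < d)
      = insert e (Finset.univ.filter (fun l : Fin N => c < l ∧ l < e)) := by
    ext l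
    simp only [Finset.mem_filter, Finset.mem_univ, true_and, Finset.mem_insert, Fin.lt_def]
    rw [Fin.lt_def] at hce
    constructor
    · intro ⟨h1, h2⟩
      rcases Nat.lt_or_ge (l:ℕ) e with h'|h'
      · exact Or.inr ⟨h1, h'⟩
      · left; apply Fin.ext; omega
    · rintro (rfl|⟨h1,h2⟩) <;> constructor <;> omega
  rw [this, Finset.sum_insert (by simp)]

lemma rho_swap (n N : ℕ)
    (ρ : Equiv.Perm (Fin N) →* Matrix (Fin N → Fin N) (Fin N → Fin N) ℂ)
    (hρ : ∀ (l : ℕ) (h : l + 1 < N),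
      ρ (Equiv.swap ⟨l, Nat.lt_of_succ_lt h⟩ ⟨l+1, h⟩) =
        Pg n N N ⟨l, Nat.lt_of_succ_lt h⟩ ⟨l+1, h⟩)
    (c d : Fin N) (hcd : (c:ℕ) < d) (y : Fin N → Fin N) :
    (ρ (Equiv.swap c d)).mulVec (ev y) =
      ((-1:ℂ) ^ (par n N (y c) * par n N (y d) +
        (par n N (y c) + par n N (y d)) *
          ∑ l ∈ Finset.univ.filter (fun l : Fin N => c < l ∧ l < d), par n N (y l))) •
      ev (y ∘ Equiv.swap c d) := by
  obtain ⟨g, hg⟩ : ∃ g, (d:ℕ) = (c:ℕ) + 1 + g := ⟨(d:ℕ) - (c:ℕ) - 1, by omega⟩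
  clear hcd
  induction g generalizing c d y with
  | zero =>
      -- adjacent case
      have hadj : ρ (Equiv.swap c d) = Pg n N N c d := by
        have h1 : (c:ℕ) + 1 < N := by omega
        have h2 := hρ (c:ℕ) h1
        convert h2 using 3
        all_goals first
          | exact Fin.ext (show (d:ℕ) = (c:ℕ)+1 by omega)
          | omega
      rw [hadj, Pg_mulVec_adj n N N c d (by omega) y]
      have hemp : ∑ l ∈ Finset.univ.filter (fun l : Fin N => c < l ∧ l < d),
          par n N (y l) = 0 := by
        apply Finset.sum_eq_zero
        intro l hl
        exfalso
        have := (Finset.mem_filter.mp hl).2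
        rw [Fin.lt_def, Fin.lt_def] at this
        omega
      rw [hemp, Nat.mul_zero, Nat.add_zero]
  | succ g ih =>
      set e : Fin N := ⟨(d:ℕ) - 1, by omega⟩ with he
      have hev : (e:ℕ) = (d:ℕ) - 1 := rfl
      have hce : (c:ℕ) < (e:ℕ) := by omega
      have hcne : c ≠ e := fun h => by rw [h] at hce; omega
      have hcnd : c ≠ d := fun h => by rw [h] at hg; omega
      have hend : (e:ℕ) + 1 = (d:ℕ) := by omega
      have hdecomp : Equiv.swap c d = Equiv.swap e d * Equiv.swap c e * Equiv.swap e d := by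
        rw [Equiv.swap_mul_swap_mul_swap hcne hcnd, Equiv.swap_comm]
      have h1e : (e:ℕ) + 1 < N := by omega
      have hadj : ρ (Equiv.swap e d) = Pg n N N e d := by
        have h2 := hρ (e:ℕ) h1e
        convert h2 using 3
        all_goals first
          | exact Fin.ext (show (d:ℕ) = (e:ℕ)+1 by omega)
          | omega
      rw [show ρ (Equiv.swap c d) = ρ (Equiv.swap e d) * ρ (Equiv.swap c e) * ρ (Equiv.swap e d)
          by rw [hdecomp, map_mul, map_mul],
        hadj, ← Matrix.mulVec_mulVec, ← Matrix.mulVec_mulVec,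
        Pg_mulVec_adj n N N e d hend y, Matrix.mulVec_smul,
        ih c e (y ∘ Equiv.swap e d) (by omega), Matrix.mulVec_smul, Matrix.mulVec_smul,
        Pg_mulVec_adj n N N e d hend]
      -- now combine
      have key1 : (y ∘ Equiv.swap e d) c = y c := by
        rw [Function.comp_apply, Equiv.swap_apply_of_ne_of_ne hcne hcnd]
      have key2 : (y ∘ Equiv.swap e d) e = y d := by
        rw [Function.comp_apply, Equiv.swap_apply_left]
      have key3 : ((y ∘ Equiv.swap e d) ∘ Equiv.swap c e) e
          = y c := by
        rw [Function.comp_apply, Function.comp_apply, Equiv.swap_apply_right,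
          Equiv.swap_apply_of_ne_of_ne hcne hcnd]
      have key4 : ((y ∘ Equiv.swap e d) ∘ Equiv.swap c e) d = y e := by
        have h1 : Equiv.swap c e d = d := by
          apply Equiv.swap_apply_of_ne_of_ne
          · exact fun h => hcnd h.symm
          · intro h; rw [← h] at hend; omega
        rw [Function.comp_apply, Function.comp_apply, h1, Equiv.swap_apply_right]
      have hvec : ((y ∘ Equiv.swap e d) ∘ Equiv.swap c e) ∘ Equiv.swap e d
          = y ∘ Equiv.swap c d := by
        funext l
        simp only [Function.comp_apply]
        congr 1
        rw [hdecomp]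
        rfl
      have hsum : ∑ l ∈ Finset.univ.filter (fun l : Fin N => c < l ∧ l < e),
          par n N ((y ∘ Equiv.swap e d) l)
          = ∑ l ∈ Finset.univ.filter (fun l : Fin N => c < l ∧ l < e), par n N (y l) := by
        apply Finset.sum_congr rfl
        intro l hl
        have h2 := (Finset.mem_filter.mp hl).2
        rw [Fin.lt_def, Fin.lt_def] at h2
        have hle : l ≠ e := fun h => by rw [h] at h2; omega
        have hld : l ≠ d := fun h => by rw [h] at h2; omega
        rw [Function.comp_apply, Equiv.swap_apply_of_ne_of_ne hle hld]
      rw [key1, key2, key3, key4, hvec, hsum, smul_smul, smul_smul, ← pow_add, ← pow_add]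
      congr 1
      apply neg_one_pow_mod
      rw [sum_between_succ N c e d (by rw [Fin.lt_def]; omega) hend]
      rcases par_cases n N (y c) with h1|h1 <;> rcases par_cases n N (y d) with h2|h2 <;>
        rcases par_cases n N (y e) with h3|h3 <;> rw [h1, h2, h3] <;> omega

end Glnm
namespace Glnm

def idv (N : ℕ) : Fin N → Fin N := fun j => j

@[simp] lemma idv_apply (N : ℕ) (j : Fin N) : idv N j = j := rfl

lemma sum_lt_split (N : ℕ) (c d : Fin N) (hcd : (c:ℕ) < (d:ℕ)) (f : Fin N → ℕ) :
    ∑ l ∈ Finset.univ.filter (fun l : Fin N => l < d), f l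
      = f c + (∑ l ∈ Finset.univ.filter (fun l : Fin N => l < c), f l
        + ∑ l ∈ Finset.univ.filter (fun l : Fin N => c < l ∧ l < d), f l) := by
  have hmem : c ∈ Finset.univ.filter (fun l : Fin N => l < d) := by
    rw [Finset.mem_filter]
    exact ⟨Finset.mem_univ _, by rw [Fin.lt_def]; exact hcd⟩
  rw [← Finset.add_sum_erase _ f hmem]
  congr 1
  have hset : (Finset.univ.filter (fun l : Fin N => l < d)).erase c
      = Finset.univ.filter (fun l : Fin N => l < c)
        ∪ Finset.univ.filter (fun l : Fin N => c < l ∧ l < d) := by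
    ext l
    simp only [Finset.mem_erase, Finset.mem_filter, Finset.mem_univ, true_and,
      Finset.mem_union, ne_eq, Fin.ext_iff, Fin.lt_def]
    omega
  rw [hset, Finset.sum_union]
  rw [Finset.disjoint_left]
  intro l hl hl'
  simp only [Finset.mem_filter, Finset.mem_univ, true_and, Fin.lt_def] at hl hl'
  omega

/-- Collapse `Egen.mulVec` when exactly one slot matches. -/
lemma Egen_mulVec_single (n N k : ℕ) (a b : Fin N) (y : Fin k → Fin N) (j0 : Fin k)
    (hy : y j0 = b) (huniq : ∀ j, y j = b → j = j0) :
    (Egen n N k a b).mulVec (ev y) =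
      ((-1 : ℂ) ^ ((par n N a + par n N b) *
          ∑ l ∈ Finset.univ.filter (fun l : Fin k => l < j0), par n N (y l))) •
        ev (Function.update y j0 a) := by
  rw [Egen_mulVec, Finset.sum_eq_single j0]
  · rw [if_pos hy]
  · intro j _ hj
    rw [if_neg (fun h => hj (huniq j h))]
  · intro h; exact absurd (Finset.mem_univ _) h

/-- Collapse `Egen.mulVec` when exactly two slots match. -/
lemma Egen_mulVec_pair (n N k : ℕ) (a b : Fin N) (y : Fin k → Fin N) (j0 j1 : Fin k)
    (hne : j0 ≠ j1) (h0 : y j0 = b) (h1 : y j1 = b)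
    (huniq : ∀ j, y j = b → j = j0 ∨ j = j1) :
    (Egen n N k a b).mulVec (ev y) =
      ((-1 : ℂ) ^ ((par n N a + par n N b) *
          ∑ l ∈ Finset.univ.filter (fun l : Fin k => l < j0), par n N (y l))) •
        ev (Function.update y j0 a)
      + ((-1 : ℂ) ^ ((par n N a + par n N b) *
          ∑ l ∈ Finset.univ.filter (fun l : Fin k => l < j1), par n N (y l))) •
        ev (Function.update y j1 a) := by
  rw [Egen_mulVec]
  rw [← Finset.sum_subset (Finset.subset_univ ({j0, j1} : Finset (Fin k)))]
  · rw [Finset.sum_pair hne, if_pos h0, if_pos h1]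
  · intro j _ hj
    simp only [Finset.mem_insert, Finset.mem_singleton] at hj
    push_neg at hj
    rw [if_neg (fun h => by rcases huniq j h with h'|h' <;> [exact hj.1 h'; exact hj.2 h'])]

end Glnm

open Glnm in
/-- Eigenvector Lemma: `(E_{ab}E_{ba} − E_{aa}) Ω^i = (−1)^{p(b)+i} Ω^i`. -/
theorem omega_eigenvector (n m : ℕ) (i : ℕ) (hi : i = 0 ∨ i = 1)
    (ρ : Equiv.Perm (Fin (n + m)) →*
      Matrix (Fin (n + m) → Fin (n + m)) (Fin (n + m) → Fin (n + m)) ℂ)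
    (hρ : ∀ (l : ℕ) (h : l + 1 < n + m),
      ρ (Equiv.swap ⟨l, Nat.lt_of_succ_lt h⟩ ⟨l + 1, h⟩) =
        Pg n (n + m) (n + m) ⟨l, Nat.lt_of_succ_lt h⟩ ⟨l + 1, h⟩)
    (a b : Fin (n + m)) (hab : a ≠ b) :
    Matrix.mulVec
        (Egen n (n + m) (n + m) a b * Egen n (n + m) (n + m) b a -
          Egen n (n + m) (n + m) a a) (OmegaVec (n + m) i ρ) =
      ((-1 : ℂ) ^ (par n (n + m) b + i)) • OmegaVec (n + m) i ρ := by
  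
  classical
  have hvalne : (a:ℕ) ≠ (b:ℕ) := fun h => hab (Fin.ext h)
  set X := Egen n (n+m) (n+m) a b * Egen n (n+m) (n+m) b a - Egen n (n+m) (n+m) a a with hX
  have hXcomm : ∀ σ : Equiv.Perm (Fin (n+m)), X * ρ σ = ρ σ * X := by
    intro σ
    have h1 := Egen_comm_rho n (n+m) ρ hρ a b σ
    have h2 := Egen_comm_rho n (n+m) ρ hρ b a σ
    have h3 := Egen_comm_rho n (n+m) ρ hρ a a σ
    rw [hX, sub_mul, mul_sub, mul_assoc, h2, ← mul_assoc, h1, mul_assoc, h3]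
  have hbase : baseVec (n+m) = ev (idv (n+m)) := rfl
  set z : Fin (n+m) → Fin (n+m) := Function.update (idv (n+m)) a b with hz
  set w : Fin (n+m) → Fin (n+m) := Function.update z b a with hwdef
  have hzb : z b = b := by rw [hz, Function.update_of_ne (Ne.symm hab), idv_apply]
  have hza : z a = b := by rw [hz, Function.update_self]
  have hzl : ∀ l, l ≠ a → z l = l := fun l hl => by
    rw [hz, Function.update_of_ne hl, idv_apply]
  -- Step (a): E_{ba} v
  have hv1 : (Egen n (n+m) (n+m) b a).mulVec (ev (idv (n+m))) =
      ((-1:ℂ) ^ ((par n (n+m) b + par n (n+m) a) *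
        ∑ l ∈ Finset.univ.filter (fun l : Fin (n+m) => l < a), par n (n+m) l)) •
      ev z := by
    have := Egen_mulVec_single n (n+m) (n+m) b a (idv (n+m)) a rfl (fun j h => h)
    simpa only [idv_apply] using this
  -- Step (b): E_{ab} (E_{ba} v)
  have hv2 : (Egen n (n+m) (n+m) a b).mulVec (ev z) =
      ((-1:ℂ) ^ ((par n (n+m) a + par n (n+m) b) *
        ∑ l ∈ Finset.univ.filter (fun l : Fin (n+m) => l < a), par n (n+m) (z l))) •
        ev (Function.update z a a)
      + ((-1:ℂ) ^ ((par n (n+m) a + par n (n+m) b) *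
        ∑ l ∈ Finset.univ.filter (fun l : Fin (n+m) => l < b), par n (n+m) (z l))) •
        ev w := by
    exact Egen_mulVec_pair n (n+m) (n+m) a b z a b hab hza hzb (fun j h => by
      by_cases hj : j = a
      · exact Or.inl hj
      · right; rw [hzl j hj] at h; exact h)
  have hupd : Function.update z a a = idv (n+m) := by
    rw [hz, Function.update_idem]
    exact Function.update_eq_self a (idv (n+m))
  have hsza : ∑ l ∈ Finset.univ.filter (fun l : Fin (n+m) => l < a), par n (n+m) (z l)
      = ∑ l ∈ Finset.univ.filter (fun l : Fin (n+m) => l < a), par n (n+m) l := by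
    apply Finset.sum_congr rfl
    intro l hl
    rw [hzl l (ne_of_lt (Finset.mem_filter.mp hl).2)]
  -- Step (c): E_{aa} v
  have hv3 : (Egen n (n+m) (n+m) a a).mulVec (ev (idv (n+m))) =
      ((-1:ℂ) ^ ((par n (n+m) a + par n (n+m) a) *
        ∑ l ∈ Finset.univ.filter (fun l : Fin (n+m) => l < a), par n (n+m) l)) •
      ev (idv (n+m)) := by
    have h0 := Egen_mulVec_single n (n+m) (n+m) a a (idv (n+m)) a rfl (fun j h => h)
    have hupd2 : Function.update (idv (n+m)) a a = idv (n+m) :=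
      Function.update_eq_self a (idv (n+m))
    rw [hupd2] at h0
    simpa only [idv_apply] using h0
  -- Combine: X v
  have hXv : X.mulVec (baseVec (n+m)) =
      ((-1:ℂ) ^ ((par n (n+m) b + par n (n+m) a) *
          (∑ l ∈ Finset.univ.filter (fun l : Fin (n+m) => l < a), par n (n+m) l)
        + (par n (n+m) a + par n (n+m) b) *
          (∑ l ∈ Finset.univ.filter (fun l : Fin (n+m) => l < b), par n (n+m) (z l)))) •
      ev w := by
    rw [hbase, hX, Matrix.sub_mulVec, ← Matrix.mulVec_mulVec, hv1, Matrix.mulVec_smul, hv2,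
      hv3, hupd, hsza, smul_add, smul_smul, smul_smul, ← pow_add, ← pow_add]
    have hone : (-1:ℂ) ^ ((par n (n+m) b + par n (n+m) a) *
          (∑ l ∈ Finset.univ.filter (fun l : Fin (n+m) => l < a), par n (n+m) l)
        + (par n (n+m) a + par n (n+m) b) *
          (∑ l ∈ Finset.univ.filter (fun l : Fin (n+m) => l < a), par n (n+m) l))
        = (-1:ℂ) ^ ((par n (n+m) a + par n (n+m) a) *
          (∑ l ∈ Finset.univ.filter (fun l : Fin (n+m) => l < a), par n (n+m) l)) := by
      apply neg_one_pow_mod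
      rcases par_cases n (n+m) a with h1|h1 <;> rcases par_cases n (n+m) b with h2|h2 <;>
        rw [h1, h2] <;> omega
    rw [hone, add_sub_cancel_left]
  -- swap identity for w
  have hwswap : idv (n+m) ∘ ⇑(Equiv.swap a b) = w := by
    funext l
    simp only [Function.comp_apply, idv_apply]
    by_cases hla : l = a
    · rw [hla, Equiv.swap_apply_left, hwdef, Function.update_of_ne hab, hza]
    · by_cases hlb : l = b
      · rw [hlb, Equiv.swap_apply_right, hwdef, Function.update_self]
      · rw [Equiv.swap_apply_of_ne_of_ne hla hlb, hwdef, Function.update_of_ne hlb, hzl l hla]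
  have hsτ : Equiv.Perm.sign (Equiv.swap a b) = -1 := Equiv.Perm.sign_swap hab
  -- obtain the combined sign exponent
  obtain ⟨E, hXv2, hE⟩ : ∃ E : ℕ,
      X.mulVec (baseVec (n+m)) =
        ((-1:ℂ)^E) • (ρ (Equiv.swap a b)).mulVec (ev (idv (n+m)))
      ∧ E % 2 = (par n (n+m) b) % 2 := by
    rcases Nat.lt_or_ge (a:ℕ) (b:ℕ) with hlt | hge
    · -- a < b
      have hrs := rho_swap n (n+m) ρ hρ a b hlt (idv (n+m))
      simp only [idv_apply] at hrs
      rw [hwswap] at hrs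
      set Q := ∑ l ∈ Finset.univ.filter (fun l : Fin (n+m) => a < l ∧ l < b),
        par n (n+m) l with hQ
      set D := par n (n+m) a * par n (n+m) b
        + (par n (n+m) a + par n (n+m) b) * Q with hD
      have hevw : ev w = ((-1:ℂ)^D) • (ρ (Equiv.swap a b)).mulVec (ev (idv (n+m))) := by
        rw [hrs, smul_smul, ← pow_add,
          neg_one_pow_mod (show (D + D) % 2 = 0 % 2 by omega), pow_zero, one_smul]
      refine ⟨_ + D, by rw [hXv, hevw, smul_smul, ← pow_add], ?_⟩
      -- arithmetic
      have hTb : ∑ l ∈ Finset.univ.filter (fun l : Fin (n+m) => l < b), par n (n+m) (z l)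
          = par n (n+m) b
            + ((∑ l ∈ Finset.univ.filter (fun l : Fin (n+m) => l < a), par n (n+m) l) + Q) := by
        have h0 : ∑ l ∈ Finset.univ.filter (fun l : Fin (n+m) => l < b), par n (n+m) (z l)
            = par n (n+m) (z a)
              + ((∑ l ∈ Finset.univ.filter (fun l : Fin (n+m) => l < a), par n (n+m) (z l))
                + ∑ l ∈ Finset.univ.filter (fun l : Fin (n+m) => a < l ∧ l < b),
                    par n (n+m) (z l)) :=
          sum_lt_split (n+m) a b hlt (fun l => par n (n+m) (z l))
        rw [h0, hza, hsza, hQ]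
        congr 2
        apply Finset.sum_congr rfl
        intro l hl
        have := (Finset.mem_filter.mp hl).2.1
        rw [Fin.lt_def] at this
        rw [hzl l (by intro h; rw [h] at this; omega)]
      rw [hTb, hD]
      rcases par_cases n (n+m) a with h1|h1 <;> rcases par_cases n (n+m) b with h2|h2 <;>
        rw [h1, h2] <;> omega
    · -- b < a
      have hblt : (b:ℕ) < (a:ℕ) := by omega
      have hrs := rho_swap n (n+m) ρ hρ b a hblt (idv (n+m))
      rw [Equiv.swap_comm b a] at hrs
      simp only [idv_apply] at hrs
      rw [hwswap] at hrs
      set Q := ∑ l ∈ Finset.univ.filter (fun l : Fin (n+m) => b < l ∧ l < a),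
        par n (n+m) l with hQ
      set D := par n (n+m) b * par n (n+m) a
        + (par n (n+m) b + par n (n+m) a) * Q with hD
      have hevw : ev w = ((-1:ℂ)^D) • (ρ (Equiv.swap a b)).mulVec (ev (idv (n+m))) := by
        rw [hrs, smul_smul, ← pow_add,
          neg_one_pow_mod (show (D + D) % 2 = 0 % 2 by omega), pow_zero, one_smul]
      refine ⟨_ + D, by rw [hXv, hevw, smul_smul, ← pow_add], ?_⟩
      have hTb : ∑ l ∈ Finset.univ.filter (fun l : Fin (n+m) => l < b), par n (n+m) (z l)
          = ∑ l ∈ Finset.univ.filter (fun l : Fin (n+m) => l < b), par n (n+m) l := by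
        apply Finset.sum_congr rfl
        intro l hl
        have := (Finset.mem_filter.mp hl).2
        rw [Fin.lt_def] at this
        rw [hzl l (by intro h; rw [h] at this; omega)]
      have hSa : (∑ l ∈ Finset.univ.filter (fun l : Fin (n+m) => l < a), par n (n+m) l)
          = par n (n+m) b
            + ((∑ l ∈ Finset.univ.filter (fun l : Fin (n+m) => l < b), par n (n+m) l) + Q) :=
        sum_lt_split (n+m) b a hblt (fun l => par n (n+m) l)
      rw [hTb, hSa, hD]
      rcases par_cases n (n+m) a with h1|h1 <;> rcases par_cases n (n+m) b with h2|h2 <;>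
        rw [h1, h2] <;> omega
  -- final assembly
  calc X.mulVec (OmegaVec (n+m) i ρ)
      = ∑ σ : Equiv.Perm (Fin (n+m)),
          ((((Equiv.Perm.sign σ : ℤ) : ℂ) ^ i * (-1:ℂ)^E) •
            (ρ (σ * Equiv.swap a b)).mulVec (ev (idv (n+m)))) := by
        rw [OmegaVec, mulVec_sum]
        apply Finset.sum_congr rfl
        intro σ _
        rw [Matrix.mulVec_smul, Matrix.mulVec_mulVec, hXcomm σ, ← Matrix.mulVec_mulVec,
          hXv2, Matrix.mulVec_smul, Matrix.mulVec_mulVec, ← map_mul, smul_smul]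
    _ = ∑ σ : Equiv.Perm (Fin (n+m)),
          (((-1:ℂ) ^ (par n (n+m) b + i) * ((Equiv.Perm.sign σ : ℤ) : ℂ) ^ i) •
            (ρ σ).mulVec (ev (idv (n+m)))) := by
        apply Fintype.sum_equiv (Equiv.mulRight (Equiv.swap a b))
        intro σ
        simp only [Equiv.coe_mulRight]
        congr 1
        rw [Equiv.Perm.sign_mul, hsτ, mul_neg_one, Units.val_neg, Int.cast_neg, neg_pow]
        have hcoef2 : (-1:ℂ)^E = (-1:ℂ)^(par n (n+m) b + i) * (-1:ℂ)^i := by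
          rw [← pow_add]
          exact neg_one_pow_mod (by omega)
        rw [hcoef2]
        ring
    _ = ((-1:ℂ) ^ (par n (n+m) b + i)) • OmegaVec (n+m) i ρ := by
        rw [OmegaVec, Finset.smul_sum]
        apply Finset.sum_congr rfl
        intro σ _
        rw [hbase, smul_smul]
end

section
/- For i ∈ {0,1}, all a ≠ b in {1,…,N} and all z_1,…,z_N ∈ ℂ, the vector Ω^i annihilates the difference of anticommutators: Ω^i ⬝ (({∑_{j=1}^N z_j e^{(j)}_{aa}, (−1)^{p(b)}(E_{ab}E_{ba} − E_{aa})} − {∑_{j=1}^N z_j e^{(j)}_{bb}, (−1)^{p(a)}(E_{ba}E_{ab} − E_{bb})}) v) = 0 for every v ∈ V, where {X,Y} := XY + YX and ⬝ is the standard (bilinear, unconjugated) pairing on ℂ^{N^N}. -/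
/-!
The matrix `M` of the difference of anticommutators is symmetric, since `e^{(j)}_{ab}`
transposes to `e^{(j)}_{ba}`; hence `Ω ⬝ (M v) = (M Ω) ⬝ v` and it suffices that `M Ω = 0`.
Adjacent graded permutations only permute tensor slots, so `Ω` is supported on basis vectors
`e_x` with `x : Fin N → Fin N` bijective. For such `x`, with `a` in slot `q` and `b` in slot
`r`, both `E_ab E_ba − E_aa` and `E_ba E_ab − E_bb` send `e_x` to signed multiples of
`e_{x ∘ (q r)}`, while the diagonal parts act by `z_q` on one of `e_x`, `e_{x ∘ (q r)}` and by
`z_r` on the other. So both anticommutators send `e_x` to `(z_q + z_r)` times a signed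
`e_{x ∘ (q r)}`, and a parity count shows that the two Koszul signs, weighted by `(-1)^{p(b)}`
and `(-1)^{p(a)}`, agree.
-/

open Finset

namespace Glnm

open Matrix

variable {n N k : ℕ}

lemma acomm_mulVec_eq_smul {ι R : Type*} [Fintype ι] [DecidableEq ι] [CommRing R]
    {A X : Matrix ι ι R} {v w : ι → R} {α β s : R}
    (hv : A *ᵥ v = α • v) (hw : A *ᵥ w = β • w) (hX : X *ᵥ v = s • w) :
    acomm A X *ᵥ v = ((α + β) * s) • w := by
  rw [acomm, add_mulVec, ← mulVec_mulVec, ← mulVec_mulVec, hX, hv,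
    mulVec_smul, mulVec_smul, hw, hX, smul_smul, smul_smul, ← add_smul]
  ring_nf

lemma isSymm_acomm {ι R : Type*} [Fintype ι] [DecidableEq ι] [CommRing R]
    {X Y : Matrix ι ι R} (hX : X.IsSymm) (hY : Y.IsSymm) : (acomm X Y).IsSymm := by
  rw [acomm, IsSymm, transpose_add, transpose_mul, transpose_mul, hX.eq, hY.eq, add_comm]

lemma dotProduct_mulVec_eq_zero_of_isSymm {ι R : Type*} [Fintype ι] [DecidableEq ι]
    [CommSemiring R] {M : Matrix ι ι R} (hM : M.IsSymm) {S : Set ι} {u : ι → R}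
    (hu : ∀ y ∉ S, u y = 0) (hMS : ∀ x ∈ S, M *ᵥ Pi.single x 1 = 0) (v : ι → R) :
    u ⬝ᵥ M *ᵥ v = 0 := by
  rw [dotProduct_mulVec, ← mulVec_transpose, hM.eq]
  suffices M *ᵥ u = 0 by rw [this, zero_dotProduct]
  ext y
  refine sum_eq_zero fun x _ => ?_
  by_cases hx : x ∈ S
  · simp [show M y x = 0 by simpa using congrFun (hMS x hx) y]
  · simp [hu x hx]

/-- Matrices leaving the span of the basis vectors `Pi.single x 1`, `x ∈ S`, invariant. -/
def supportPreserving {ι R : Type*} [Fintype ι] [DecidableEq ι] [Semiring R] (S : Set ι) :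
    Submonoid (Matrix ι ι R) where
  carrier := {T | ∀ y x, T y x ≠ 0 → x ∈ S → y ∈ S}
  one_mem' := by
    intro y x h hx
    rwa [of_not_not fun hyx => h (one_apply_ne hyx)]
  mul_mem' := by
    intro T U hT hU y x h hx
    obtain ⟨w, -, hw⟩ := exists_ne_zero_of_sum_ne_zero h
    exact hT y w (left_ne_zero_of_mul hw) (hU w x (right_ne_zero_of_mul hw) hx)

def parSumBefore (n N k : ℕ) (j : Fin k) (x : Fin k → Fin N) : ℕ :=
  ∑ l ∈ univ.filter (· < j), par n N (x l)

def koszulSign (n N k : ℕ) (a b : Fin N) (j : Fin k) (x : Fin k → Fin N) : ℂ :=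
  (-1) ^ ((par n N a + par n N b) * parSumBefore n N k j x)

lemma parSumBefore_update (j u : Fin k) (x : Fin k → Fin N) (c : Fin N) :
    parSumBefore n N k j (Function.update x u c) + (if u < j then par n N (x u) else 0) =
      parSumBefore n N k j x + (if u < j then par n N c else 0) := by
  unfold parSumBefore
  split_ifs with huj
  · have hu : u ∈ univ.filter (· < j) := by simpa using huj
    rw [← add_sum_erase _ _ hu, ← add_sum_erase _ _ hu, Function.update_self]
    rw [sum_congr rfl fun l hl => by rw [Function.update_of_ne (ne_of_mem_erase hl)]]
    ring
  · rw [add_zero, add_zero]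
    refine sum_congr rfl fun l hl => congrArg _ (Function.update_of_ne ?_ _ _)
    rintro rfl
    exact huj (by simpa using hl)

lemma parSumBefore_update_self (j : Fin k) (x : Fin k → Fin N) (c : Fin N) :
    parSumBefore n N k j (Function.update x j c) = parSumBefore n N k j x := by
  simpa using parSumBefore_update (n := n) j j x c

lemma koszulSign_comm (a b : Fin N) (j : Fin k) (x : Fin k → Fin N) :
    koszulSign n N k b a j x = koszulSign n N k a b j x := by
  rw [koszulSign, add_comm, koszulSign]

lemma koszulSign_mul_self (a b : Fin N) (j : Fin k) (x : Fin k → Fin N) :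
    koszulSign n N k a b j x * koszulSign n N k a b j x = 1 := by
  rw [koszulSign, ← pow_add, ← two_mul, pow_mul, neg_one_sq, one_pow]

lemma koszulSign_self (a : Fin N) (j : Fin k) (x : Fin k → Fin N) :
    koszulSign n N k a a j x = 1 := by
  rw [koszulSign, ← two_mul, mul_assoc, pow_mul, neg_one_sq, one_pow]

lemma koszulSign_update_self (a b : Fin N) (j : Fin k) (x : Fin k → Fin N) (c : Fin N) :
    koszulSign n N k a b j (Function.update x j c) = koszulSign n N k a b j x := by
  rw [koszulSign, parSumBefore_update_self, koszulSign]

lemma eop_apply_s16 (j : Fin k) (a b : Fin N) (y x : Fin k → Fin N) :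
    eop n N k j a b y x =
      if y = Function.update x j a ∧ x j = b then koszulSign n N k a b j x else 0 := by
  rw [eop, prod_boole, show ∑ l ∈ univ.filter (· < j), par n N (y l) = parSumBefore n N k j y
    from rfl]
  by_cases h : y = Function.update x j a ∧ x j = b
  · obtain ⟨rfl, hb⟩ := h
    simp +contextual [hb, koszulSign, parSumBefore_update_self, Function.update_of_ne]
  · rw [if_neg h]
    rw [Function.eq_update_iff] at h
    split_ifs <;> simp_all

lemma eop_transpose (j : Fin k) (a b : Fin N) : (eop n N k j a b)ᵀ = eop n N k j b a := by
  ext y x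
  rw [transpose_apply, eop_apply_s16, eop_apply_s16]
  by_cases h : x = Function.update y j a ∧ y j = b
  · obtain ⟨rfl, hb⟩ := h
    have hy : Function.update (Function.update y j a) j b = y := by
      rw [Function.update_idem, ← hb, Function.update_eq_self]
    simp [hy, hb, koszulSign_comm, koszulSign_update_self]
  · have h' : ¬ (y = Function.update x j b ∧ x j = a) := by
      rintro ⟨rfl, ha⟩
      exact h ⟨by simp [← ha], by simp⟩
    rw [if_neg h, if_neg h']

lemma Egen_transpose (a b : Fin N) : (Egen n N k a b)ᵀ = Egen n N k b a := by
  simp only [Egen, transpose_sum, eop_transpose]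

lemma eop_mulVec_single (j : Fin k) (a b : Fin N) (x : Fin k → Fin N) :
    eop n N k j a b *ᵥ Pi.single x 1 =
      if x j = b then koszulSign n N k a b j x • Pi.single (Function.update x j a) 1 else 0 := by
  ext y
  rw [mulVec_single_one, col_apply, eop_apply_s16]
  split_ifs <;> simp_all

lemma Egen_mulVec_single_s16 (a b : Fin N) (x : Fin k → Fin N) :
    Egen n N k a b *ᵥ Pi.single x 1 =
      ∑ j ∈ univ.filter (x · = b),
        koszulSign n N k a b j x • Pi.single (Function.update x j a) 1 := by
  simp only [Egen, sum_mulVec, eop_mulVec_single, sum_filter]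

lemma filter_apply_eq_eq_singleton {x : Fin k → Fin N} {a : Fin N} {q : Fin k}
    (hq : ∀ j, x j = a ↔ j = q) : univ.filter (x · = a) = {q} := by
  ext j
  simp [hq]

lemma sum_smul_eop_mulVec_single {a : Fin N} (z : Fin k → ℂ) {x : Fin k → Fin N} {q : Fin k}
    (hq : ∀ j, x j = a ↔ j = q) :
    (∑ j, z j • eop n N k j a a) *ᵥ Pi.single x 1 = z q • Pi.single x 1 := by
  have hxq : Function.update x q a = x := by rw [← (hq q).2 rfl, Function.update_eq_self]
  simp only [sum_mulVec, smul_mulVec, eop_mulVec_single, hq, hxq, koszulSign_self,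
    one_smul, smul_ite, smul_zero, sum_ite_eq', mem_univ, ↓reduceIte]

lemma Egen_mul_Egen_sub_mulVec_single {a b : Fin N} (hab : a ≠ b) {x : Fin k → Fin N}
    {q r : Fin k} (hq : ∀ j, x j = a ↔ j = q) (hr : ∀ j, x j = b ↔ j = r) :
    (Egen n N k a b * Egen n N k b a - Egen n N k a a) *ᵥ Pi.single x 1 =
      (koszulSign n N k a b q x * koszulSign n N k a b r (Function.update x q b)) •
        Pi.single (x ∘ Equiv.swap q r) 1 := by
  have hxq : x q = a := (hq q).2 rfl
  have hxr : x r = b := (hr r).2 rfl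
  have hqr : q ≠ r := by rintro rfl; exact hab (hxq.symm.trans hxr)
  have hb_pair : univ.filter (Function.update x q b · = b) = {q, r} := by
    ext j
    by_cases hj : j = q <;> simp [hj, Function.update_of_ne, hr]
  have hswap : x ∘ Equiv.swap q r = Function.update (Function.update x q b) r a := by
    rw [Equiv.comp_swap_eq_update, hxq, hxr, Function.update_comm hqr.symm]
  have hback : Function.update (Function.update x q b) q a = x := by
    rw [Function.update_idem, ← hxq, Function.update_eq_self]
  rw [sub_mulVec, ← mulVec_mulVec, Egen_mulVec_single_s16 b a x,
    filter_apply_eq_eq_singleton hq, sum_singleton, mulVec_smul, Egen_mulVec_single_s16,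
    hb_pair, sum_pair hqr, Egen_mulVec_single_s16 a a x, filter_apply_eq_eq_singleton hq,
    sum_singleton, hback, ← hxq, Function.update_eq_self, hxq, koszulSign_self,
    koszulSign_update_self, koszulSign_comm, smul_add, smul_smul, koszulSign_mul_self, hswap,
    smul_smul]
  abel

lemma neg_one_pow_par_mul_koszulSign {a b : Fin N} {x : Fin k → Fin N} {q r : Fin k}
    (hxq : x q = a) (hxr : x r = b) (hqr : q ≠ r) :
    (-1) ^ par n N b * (koszulSign n N k a b q x * koszulSign n N k a b r (Function.update x q b)) =
      (-1) ^ par n N a *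
        (koszulSign n N k a b r x * koszulSign n N k a b q (Function.update x r a)) := by
  -- The two exponents differ by `(p(a) - p(b)) * (1 + p(a) + p(b))`, which is even.
  have h1 := parSumBefore_update (n := n) r q x b
  have h2 := parSumBefore_update (n := n) q r x a
  rw [hxq] at h1
  rw [hxr] at h2
  simp only [koszulSign, ← pow_add]
  refine neg_one_pow_congr ?_
  simp only [Nat.even_iff]
  have hpa : par n N a = 0 ∨ par n N a = 1 := by unfold par; split <;> simp
  have hpb : par n N b = 0 ∨ par n N b = 1 := by unfold par; split <;> simp
  rcases lt_or_gt_of_ne hqr with hlt | hlt <;>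
    simp only [hlt, not_lt_of_gt hlt, ↓reduceIte] at h1 h2 <;>
    rcases hpa with ha | ha <;> rcases hpb with hb | hb <;>
    simp only [ha, hb] at h1 h2 ⊢ <;> omega

noncomputable def acommTerm (n N k : ℕ) (z : Fin k → ℂ) (a b : Fin N) :
    Matrix (Fin k → Fin N) (Fin k → Fin N) ℂ :=
  acomm (∑ j, z j • eop n N k j a a)
    (((-1 : ℂ) ^ par n N b) • (Egen n N k a b * Egen n N k b a - Egen n N k a a))

lemma acommTerm_sub_acommTerm_mulVec_single_eq_zero {a b : Fin N} (hab : a ≠ b)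
    (z : Fin k → ℂ) {x : Fin k → Fin N} {q r : Fin k} (hq : ∀ j, x j = a ↔ j = q)
    (hr : ∀ j, x j = b ↔ j = r) :
    (acommTerm n N k z a b - acommTerm n N k z b a) *ᵥ Pi.single x 1 = 0 := by
  have hqr : q ≠ r := by rintro rfl; exact hab (((hq q).2 rfl).symm.trans ((hr q).2 rfl))
  have hq' : ∀ j, (x ∘ Equiv.swap q r) j = a ↔ j = r := by
    intro j
    rw [Function.comp_apply, hq, Equiv.swap_apply_eq_iff, Equiv.swap_apply_left]
  have hr' : ∀ j, (x ∘ Equiv.swap q r) j = b ↔ j = q := by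
    intro j
    rw [Function.comp_apply, hr, Equiv.swap_apply_eq_iff, Equiv.swap_apply_right]
  rw [acommTerm, acommTerm, sub_mulVec, sub_eq_zero,
    acomm_mulVec_eq_smul (sum_smul_eop_mulVec_single z hq) (sum_smul_eop_mulVec_single z hq')
      (by rw [smul_mulVec, Egen_mul_Egen_sub_mulVec_single hab hq hr, smul_smul]),
    acomm_mulVec_eq_smul (sum_smul_eop_mulVec_single z hr) (sum_smul_eop_mulVec_single z hr')
      (by rw [smul_mulVec, Egen_mul_Egen_sub_mulVec_single hab.symm hr hq, smul_smul,
        Equiv.swap_comm])]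
  simp only [koszulSign_comm a b]
  rw [add_comm (z r), neg_one_pow_par_mul_koszulSign ((hq q).2 rfl) ((hr r).2 rfl) hqr]

lemma isSymm_acommTerm (z : Fin k → ℂ) (a b : Fin N) : (acommTerm n N k z a b).IsSymm := by
  refine isSymm_acomm ?_ (IsSymm.smul (IsSymm.sub ?_ ?_) _)
  · simp only [IsSymm, transpose_sum, transpose_smul, eop_transpose]
  · simpa only [Egen_transpose] using isSymm_mul_transpose_self (Egen n N k a b)
  · exact Egen_transpose a a

lemma eq_comp_swap_of_Pg_apply_ne_zero {i j : Fin k} (hij : i ≠ j) {y x : Fin k → Fin N}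
    (h : Pg n N k i j y x ≠ 0) : y = x ∘ Equiv.swap i j := by
  simp only [Pg, Matrix.sum_apply, Matrix.smul_apply, mul_apply, smul_eq_mul] at h
  obtain ⟨a, -, ha⟩ := exists_ne_zero_of_sum_ne_zero h
  obtain ⟨b, -, hb⟩ := exists_ne_zero_of_sum_ne_zero ha
  obtain ⟨w, -, hw⟩ := exists_ne_zero_of_sum_ne_zero (right_ne_zero_of_mul hb)
  have h1 := left_ne_zero_of_mul hw
  have h2 := right_ne_zero_of_mul hw
  rw [eop_apply_s16, ne_eq, ite_eq_right_iff, not_forall] at h1 h2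
  obtain ⟨⟨rfl, hwi⟩, -⟩ := h1
  obtain ⟨⟨rfl, hxj⟩, -⟩ := h2
  rw [Function.update_of_ne hij] at hwi
  rw [Equiv.comp_swap_eq_update, hwi, hxj]

lemma Pg_mem_supportPreserving {i j : Fin k} (hij : i ≠ j) :
    Pg n N k i j ∈ supportPreserving {x : Fin k → Fin N | Function.Bijective x} := by
  intro y x h hx
  rw [eq_comp_swap_of_Pg_apply_ne_zero hij h]
  exact hx.comp (Equiv.swap i j).bijective

lemma map_mem_supportPreserving
    (ρ : Equiv.Perm (Fin N) →* Matrix (Fin N → Fin N) (Fin N → Fin N) ℂ)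
    (hρ : ∀ (l : ℕ) (h : l + 1 < N),
      ρ (Equiv.swap ⟨l, Nat.lt_of_succ_lt h⟩ ⟨l + 1, h⟩) =
        Pg n N N ⟨l, Nat.lt_of_succ_lt h⟩ ⟨l + 1, h⟩)
    (σ : Equiv.Perm (Fin N)) :
    ρ σ ∈ supportPreserving {x : Fin N → Fin N | Function.Bijective x} := by
  cases N with
  | zero => exact fun y _ _ _ => ⟨fun u => u.elim0, fun u => u.elim0⟩
  | succ N =>
    suffices Submonoid.closure (Set.range fun i : Fin N => Equiv.swap i.castSucc i.succ) ≤
        (supportPreserving _).comap ρ by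
      exact this (by simp [Equiv.Perm.mclosure_swap_castSucc_succ])
    rw [Submonoid.closure_le]
    rintro _ ⟨i, rfl⟩
    show ρ (Equiv.swap ⟨i, _⟩ ⟨i + 1, i.succ.isLt⟩) ∈
      supportPreserving {x : Fin (N + 1) → Fin (N + 1) | Function.Bijective x}
    rw [hρ]
    exact Pg_mem_supportPreserving (Fin.ne_of_lt (Nat.lt_succ_self _))

lemma OmegaVec_apply_of_not_bijective
    (ρ : Equiv.Perm (Fin N) →* Matrix (Fin N → Fin N) (Fin N → Fin N) ℂ)
    (hρ : ∀ (l : ℕ) (h : l + 1 < N),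
      ρ (Equiv.swap ⟨l, Nat.lt_of_succ_lt h⟩ ⟨l + 1, h⟩) =
        Pg n N N ⟨l, Nat.lt_of_succ_lt h⟩ ⟨l + 1, h⟩)
    (i : ℕ) {y : Fin N → Fin N} (hy : ¬ Function.Bijective y) : OmegaVec N i ρ y = 0 := by
  have hbase : baseVec N = Pi.single (fun j => j) 1 := by
    ext x
    simp [baseVec, Pi.single_apply]
  refine (Finset.sum_apply y _ _).trans (sum_eq_zero fun σ _ => ?_)
  have hcol : ρ σ y (fun j => j) = 0 := of_not_not fun h =>
    hy (map_mem_supportPreserving ρ hρ σ y _ h Function.bijective_id)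
  rw [Pi.smul_apply, hbase, mulVec_single_one, col_apply, hcol, smul_zero]

end Glnm

open Glnm in
theorem omega_kills_anticommutator_difference_general (n m : ℕ) (i : ℕ)
    (ρ : Equiv.Perm (Fin (n + m)) →*
      Matrix (Fin (n + m) → Fin (n + m)) (Fin (n + m) → Fin (n + m)) ℂ)
    (hρ : ∀ (l : ℕ) (h : l + 1 < n + m),
      ρ (Equiv.swap ⟨l, Nat.lt_of_succ_lt h⟩ ⟨l + 1, h⟩) =
        Pg n (n + m) (n + m) ⟨l, Nat.lt_of_succ_lt h⟩ ⟨l + 1, h⟩)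
    (a b : Fin (n + m)) (hab : a ≠ b)
    (z : Fin (n + m) → ℂ) (v : (Fin (n + m) → Fin (n + m)) → ℂ) :
    dotProduct (OmegaVec (n + m) i ρ)
      (Matrix.mulVec
        (acomm (∑ j : Fin (n + m), z j • eop n (n + m) (n + m) j a a)
            (((-1 : ℂ) ^ par n (n + m) b) •
              (Egen n (n + m) (n + m) a b * Egen n (n + m) (n + m) b a -
                Egen n (n + m) (n + m) a a)) -
          acomm (∑ j : Fin (n + m), z j • eop n (n + m) (n + m) j b b)
            (((-1 : ℂ) ^ par n (n + m) a) •
              (Egen n (n + m) (n + m) b a * Egen n (n + m) (n + m) a b -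
                Egen n (n + m) (n + m) b b))) v) = 0 := by
  refine dotProduct_mulVec_eq_zero_of_isSymm
    ((isSymm_acommTerm z a b).sub (isSymm_acommTerm z b a))
    (fun y hy => OmegaVec_apply_of_not_bijective ρ hρ i hy) (fun x hx => ?_) v
  obtain ⟨hinj, hsurj⟩ := hx
  obtain ⟨q, rfl⟩ := hsurj a
  obtain ⟨r, rfl⟩ := hsurj b
  exact acommTerm_sub_acommTerm_mulVec_single_eq_zero hab z (fun _ => hinj.eq_iff)
    (fun _ => hinj.eq_iff)

open Glnm in
/-- `Ω^i` annihilates the difference of anticommutators. -/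
theorem omega_kills_anticommutator_difference (n m : ℕ) (i : ℕ) (hi : i = 0 ∨ i = 1)
    (ρ : Equiv.Perm (Fin (n + m)) →*
      Matrix (Fin (n + m) → Fin (n + m)) (Fin (n + m) → Fin (n + m)) ℂ)
    (hρ : ∀ (l : ℕ) (h : l + 1 < n + m),
      ρ (Equiv.swap ⟨l, Nat.lt_of_succ_lt h⟩ ⟨l + 1, h⟩) =
        Pg n (n + m) (n + m) ⟨l, Nat.lt_of_succ_lt h⟩ ⟨l + 1, h⟩)
    (a b : Fin (n + m)) (hab : a ≠ b)
    (z : Fin (n + m) → ℂ) (v : (Fin (n + m) → Fin (n + m)) → ℂ) :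
    dotProduct (OmegaVec (n + m) i ρ)
      (Matrix.mulVec
        (acomm (∑ j : Fin (n + m), z j • eop n (n + m) (n + m) j a a)
            (((-1 : ℂ) ^ par n (n + m) b) •
              (Egen n (n + m) (n + m) a b * Egen n (n + m) (n + m) b a -
                Egen n (n + m) (n + m) a a)) -
          acomm (∑ j : Fin (n + m), z j • eop n (n + m) (n + m) j b b)
            (((-1 : ℂ) ^ par n (n + m) a) •
              (Egen n (n + m) (n + m) b a * Egen n (n + m) (n + m) a b -
                Egen n (n + m) (n + m) b b))) v) = 0 :=
  omega_kills_anticommutator_difference_general n m i ρ hρ a b hab z v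
end
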